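/- arXiv:math/0611097 — 6 statements merged into one kernel-verified Lean document; each statement's English description precedes it below -/
import Mathlib

section
/- Every generalized isometry between Hilbert C*-modules is φ-linear: if u : E → F satisfies ⟨ux, uy⟩ = φ(⟨x, y⟩) for all x, y ∈ E, where E is a Hilbert B-module, F a Hilbert C-module, and φ : B → C a C*-homomorphism, then u(x + y·b) = u(x) + u(y)·φ(b) for all x, y ∈ E and b ∈ B. -/
open scoped RightActions

/-! If `⟪p, p⟫ = ⟪p, q⟫` and `⟪q, p⟫ = ⟪q, q⟫` then `⟪p - q, p - q⟫ = 0`, so `p = q`. With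
`p = u (x + y <• b)` and `q = u x + u y <• φ b`, both hypotheses follow from the fact that `⟪u z, p⟫`
and `⟪u z, q⟫` both equal `φ ⟪z, x + y <• b⟫`, since `q` lies in the right submodule spanned by the
range of `u`. -/

/-- The Hilbert C⋆-module class as Mathlib defined it in December 2024 (right `A`-module,
`inner x (y <• a) = inner x y * a`); Mathlib's `CStarModule` is now a left-module class. -/
class CStarModuleOld (A E : Type*) [NonUnitalSemiring A] [StarRing A]
    [Module ℂ A] [AddCommGroup E] [Module ℂ E] [PartialOrder A] [SMul Aᵐᵒᵖ E] [Norm A] [Norm E]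
    extends Inner A E where
  inner_add_right {x} {y} {z} : inner x (y + z) = inner x y + inner x z
  inner_self_nonneg {x} : 0 ≤ inner x x
  inner_self {x} : inner x x = 0 ↔ x = 0
  inner_op_smul_right {a : A} {x y : E} : inner x (y <• a) = inner x y * a
  inner_smul_right_complex {z : ℂ} {x} {y} : inner x (z • y) = z • inner x y
  star_inner x y : star (inner x y) = inner y x
  norm_eq_sqrt_norm_inner_self x : ‖x‖ = √‖inner x x‖

namespace CStarModuleOld

variable {A E : Type*} [NonUnitalRing A] [StarRing A]
    [Module ℂ A] [AddCommGroup E] [Module ℂ E] [PartialOrder A] [SMul Aᵐᵒᵖ E] [Norm A] [Norm E]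
    [CStarModuleOld A E]

theorem inner_sub_right (x y z : E) : inner A x (y - z) = inner A x y - inner A x z :=
  map_sub (AddMonoidHom.mk' (inner A x) fun _ _ => inner_add_right) y z

theorem inner_add_left (x y z : E) : inner A (x + y) z = inner A x z + inner A y z := by
  rw [← star_inner z, inner_add_right, star_add, star_inner, star_inner]

theorem inner_sub_left (x y z : E) : inner A (x - y) z = inner A x z - inner A y z := by
  rw [← star_inner z, inner_sub_right, star_sub, star_inner, star_inner]

theorem inner_op_smul_left (a : A) (x y : E) : inner A (x <• a) y = star a * inner A x y := by
  rw [← star_inner y, inner_op_smul_right, star_mul, star_inner]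

theorem eq_of_inner_left_eq {p q : E} (hp : inner A p p = inner A p q)
    (hq : inner A q p = inner A q q) : p = q := by
  rw [← sub_eq_zero, ← inner_self (A := A), inner_sub_left, inner_sub_right, inner_sub_right, hp,
    hq, sub_self, sub_self, sub_zero]

end CStarModuleOld

theorem stmt0_general {B C E F : Type*}
    [NonUnitalCStarAlgebra B] [PartialOrder B]
    [NonUnitalCStarAlgebra C] [PartialOrder C]
    [NormedAddCommGroup E] [NormedSpace ℂ E] [SMul Bᵐᵒᵖ E] [CStarModuleOld B E]
    [NormedAddCommGroup F] [NormedSpace ℂ F] [SMul Cᵐᵒᵖ F] [CStarModuleOld C F]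
    (φ : B →⋆ₙₐ[ℂ] C) (u : E → F)
    (hu : ∀ x y : E, (inner C (u x) (u y) : C) = φ (inner B x y)) :
    ∀ (x y : E) (b : B), u (x + y <• b) = u x + (u y) <• (φ b) := by
  intro x y b
  have inner_range_eq : ∀ z, inner C (u z) (u (x + y <• b)) = inner C (u z) (u x + u y <• φ b) := by
    intro z
    rw [CStarModuleOld.inner_add_right, CStarModuleOld.inner_op_smul_right, hu, hu, hu,
      CStarModuleOld.inner_add_right, CStarModuleOld.inner_op_smul_right, map_add, map_mul]
  refine CStarModuleOld.eq_of_inner_left_eq (inner_range_eq _) ?_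
  rw [CStarModuleOld.inner_add_left, CStarModuleOld.inner_add_left,
    CStarModuleOld.inner_op_smul_left, CStarModuleOld.inner_op_smul_left, inner_range_eq,
    inner_range_eq]

theorem stmt0 {B C E F : Type*}
    [NonUnitalCStarAlgebra B] [PartialOrder B] [StarOrderedRing B]
    [NonUnitalCStarAlgebra C] [PartialOrder C] [StarOrderedRing C]
    [NormedAddCommGroup E] [NormedSpace ℂ E] [SMul Bᵐᵒᵖ E] [CStarModuleOld B E]
    [CompleteSpace E]
    [NormedAddCommGroup F] [NormedSpace ℂ F] [SMul Cᵐᵒᵖ F] [CStarModuleOld C F]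
    [CompleteSpace F]
    (φ : B →⋆ₙₐ[ℂ] C) (u : E → F)
    (hu : ∀ x y : E, (inner C (u x) (u y) : C) = φ (inner B x y)) :
    ∀ (x y : E) (b : B), u (x + y <• b) = u x + (u y) <• (φ b) :=
  stmt0_general φ u hu
end

section
/- A ternary homomorphism u from a full Hilbert B-module E to a Hilbert C-module F is injective if and only if the associated *-homomorphism φ : B → C (satisfying ⟨ux,uy⟩ = φ(⟨x,y⟩)) is injective. -/
/-!
If `φ` is injective, expanding both inner products gives
`⟪u x - u y, u x - u y⟫ = φ ⟪x - y, x - y⟫`, so `u x = u y` forces `x = y`.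
If `u` is injective and `φ b = 0`, then `⟪u (x <• b), u (x <• b)⟫ = φ (b⋆ ⟪x, x⟫ b) = 0`, so
`x <• b = 0` for every `x`. Hence `⟪y, x⟫ b = ⟪y, x <• b⟫ = 0`; fullness makes these inner products
span a dense subspace, so `b⋆ b = 0` and `b = 0` by the C⋆-identity.
-/

open scoped RightActions

/-- The Hilbert C⋆-module class as it stood in the older Mathlib (right `A`-action via `Aᵐᵒᵖ`). -/
class CStarModuleRight (A E : Type*) [NonUnitalSemiring A] [StarRing A] [Module ℂ A]
    [AddCommGroup E] [Module ℂ E] [PartialOrder A] [SMul Aᵐᵒᵖ E] [Norm A] [Norm E]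
    extends Inner A E where
  inner_add_right {x} {y} {z} : inner x (y + z) = inner x y + inner x z
  inner_self_nonneg {x} : 0 ≤ inner x x
  inner_self {x} : inner x x = 0 ↔ x = 0
  inner_op_smul_right {a : A} {x y : E} : inner x (y <• a) = inner x y * a
  inner_smul_right_complex {z : ℂ} {x} {y} : inner x (z • y) = z • inner x y
  star_inner x y : star (inner x y) = inner y x
  norm_eq_sqrt_norm_inner_self x : ‖x‖ = √‖inner x x‖

theorem mul_eq_zero_of_forall_mem_mul_eq_zero {𝕜 A : Type*} [NontriviallyNormedField 𝕜]
    [NonUnitalNormedRing A] [NormedSpace 𝕜 A] [IsScalarTower 𝕜 A A] [SMulCommClass 𝕜 A A]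
    {S : Set A} (hS : (Submodule.span 𝕜 S).topologicalClosure = ⊤) {b : A}
    (h : ∀ s ∈ S, s * b = 0) (c : A) : c * b = 0 := by
  let mulRight : A →L[𝕜] A := (ContinuousLinearMap.mul 𝕜 A).flip b
  have hspan : Submodule.span 𝕜 S ≤ LinearMap.ker (mulRight : A →ₗ[𝕜] A) :=
    Submodule.span_le.mpr h
  have hclosure := Submodule.topologicalClosure_minimal _ hspan mulRight.isClosed_ker
  rw [hS] at hclosure
  exact hclosure Submodule.mem_top

namespace CStarModuleRight

section Algebra

variable {A C E F : Type*}
  [NonUnitalRing A] [StarRing A] [Module ℂ A] [PartialOrder A] [Norm A]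
  [AddCommGroup E] [Module ℂ E] [SMul Aᵐᵒᵖ E] [Norm E] [CStarModuleRight A E]

theorem inner_zero_right (x : E) : inner A x (0 : E) = 0 := by
  have h := inner_add_right (A := A) (x := x) (y := (0 : E)) (z := 0)
  rw [add_zero] at h
  exact add_eq_left.mp h.symm

theorem inner_neg_right (x y : E) : inner A x (-y) = -inner A x y := by
  have h := inner_add_right (A := A) (x := x) (y := y) (z := -y)
  rw [add_neg_cancel, inner_zero_right] at h
  exact (neg_eq_of_add_eq_zero_right h.symm).symm

theorem inner_sub_right (x y z : E) : inner A x (y - z) = inner A x y - inner A x z := by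
  rw [sub_eq_add_neg, inner_add_right, inner_neg_right, ← sub_eq_add_neg]

theorem inner_sub_left (x y z : E) : inner A (x - y) z = inner A x z - inner A y z := by
  rw [← star_inner z, inner_sub_right, star_sub, star_inner, star_inner]

theorem inner_op_smul_left (a : A) (x y : E) : inner A (x <• a) y = star a * inner A x y := by
  rw [← star_inner y, inner_op_smul_right, star_mul, star_inner]

variable [NonUnitalRing C] [StarRing C] [Module ℂ C] [PartialOrder C] [Norm C]
  [AddCommGroup F] [Module ℂ F] [SMul Cᵐᵒᵖ F] [Norm F] [CStarModuleRight C F]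
  {G : Type*} [FunLike G A C] {u : E → F} {φ : G}

theorem map_zero_of_inner_map_eq [ZeroHomClass G A C]
    (hφ : ∀ x y : E, inner C (u x) (u y) = φ (inner A x y)) : u 0 = 0 := by
  rw [← inner_self (A := C), hφ, inner_zero_right, map_zero]

theorem map_op_smul_eq_zero_of_inner_map_eq [MulHomClass G A C]
    (hφ : ∀ x y : E, inner C (u x) (u y) = φ (inner A x y)) {b : A} (hb : φ b = 0) (x : E) :
    u (x <• b) = 0 := by
  rw [← inner_self (A := C), hφ, inner_op_smul_left, inner_op_smul_right, map_mul, map_mul, hb,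
    mul_zero, mul_zero]

theorem injective_of_inner_map_eq [AddMonoidHomClass G A C]
    (hφ : ∀ x y : E, inner C (u x) (u y) = φ (inner A x y)) (hφinj : Function.Injective φ) :
    Function.Injective u := by
  intro a b hab
  have hinner : φ (inner A (a - b) (a - b)) = φ 0 := by
    rw [inner_sub_left, inner_sub_right, inner_sub_right, map_sub, map_sub, map_sub,
      ← hφ, ← hφ, ← hφ, ← hφ, hab, sub_self, map_zero]
  exact sub_eq_zero.mp (inner_self.mp (hφinj hinner))

end Algebra

theorem eq_zero_of_forall_op_smul_eq_zero {A E : Type*} [NonUnitalCStarAlgebra A]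
    [PartialOrder A] [AddCommGroup E] [Module ℂ E] [SMul Aᵐᵒᵖ E] [Norm E]
    [CStarModuleRight A E]
    (hfull : (Submodule.span ℂ {b : A | ∃ x y : E, inner A x y = b}).topologicalClosure = ⊤)
    {b : A} (h : ∀ x : E, x <• b = 0) : b = 0 := by
  have hinner_mul : ∀ s ∈ {b : A | ∃ x y : E, inner A x y = b}, s * b = 0 := by
    rintro _ ⟨x, y, rfl⟩
    rw [← inner_op_smul_right, h, inner_zero_right]
  exact (CStarRing.star_mul_self_eq_zero_iff b).mp
    (mul_eq_zero_of_forall_mem_mul_eq_zero hfull hinner_mul (star b))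

end CStarModuleRight

theorem stmt5_general {B C E F : Type*}
    [NonUnitalCStarAlgebra B] [PartialOrder B]
    [NonUnitalCStarAlgebra C] [PartialOrder C]
    [NormedAddCommGroup E] [NormedSpace ℂ E] [SMul Bᵐᵒᵖ E] [CStarModuleRight B E]
    [NormedAddCommGroup F] [NormedSpace ℂ F] [SMul Cᵐᵒᵖ F] [CStarModuleRight C F]
    (hfull : (Submodule.span ℂ {b : B | ∃ x y : E, inner B x y = b}).topologicalClosure = ⊤)
    (u : E → F)
    (φ : B →⋆ₙₐ[ℂ] C)
    (hφ : ∀ x y : E, inner C (u x) (u y) = φ (inner B x y)) :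
    Function.Injective u ↔ Function.Injective φ := by
  refine ⟨fun hu => (injective_iff_map_eq_zero φ).mpr fun b hb => ?_,
    CStarModuleRight.injective_of_inner_map_eq hφ⟩
  refine CStarModuleRight.eq_zero_of_forall_op_smul_eq_zero hfull fun x => hu ?_
  rw [CStarModuleRight.map_op_smul_eq_zero_of_inner_map_eq hφ hb,
    CStarModuleRight.map_zero_of_inner_map_eq hφ]

theorem stmt5 {B C E F : Type*}
    [NonUnitalCStarAlgebra B] [PartialOrder B] [StarOrderedRing B]
    [NonUnitalCStarAlgebra C] [PartialOrder C] [StarOrderedRing C]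
    [NormedAddCommGroup E] [NormedSpace ℂ E] [SMul Bᵐᵒᵖ E] [CStarModuleRight B E]
    [CompleteSpace E]
    [NormedAddCommGroup F] [NormedSpace ℂ F] [SMul Cᵐᵒᵖ F] [CStarModuleRight C F]
    [CompleteSpace F]
    (hfull : (Submodule.span ℂ {b : B | ∃ x y : E, inner B x y = b}).topologicalClosure = ⊤)
    (u : E → F)
    (htern : ∀ x y z : E, u (x <• (inner B y z)) = (u x) <• (inner C (u y) (u z)))
    (φ : B →⋆ₙₐ[ℂ] C)
    (hφ : ∀ x y : E, inner C (u x) (u y) = φ (inner B x y)) :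
    Function.Injective u ↔ Function.Injective φ :=
  stmt5_general hfull u φ hφ
end

section
/- Well-definedness of the induced derivation on inner products: let δ be a ternary derivation of a full Hilbert B-module E. If y_i, z_i ∈ dom(δ) (finitely many) satisfy Σᵢ ⟨yᵢ, zᵢ⟩ = 0, then Σᵢ (⟨δ(yᵢ), zᵢ⟩ + ⟨yᵢ, δ(zᵢ)⟩) = 0. -/
open scoped RightActions

/-- The December 2024 Mathlib `CStarModule` (right Hilbert module, `SMul Aᵐᵒᵖ E`),
restated since Mathlib's `CStarModule` now describes left modules. -/
class RightCStarModule (A E : Type*) [NonUnitalSemiring A] [StarRing A] [Module ℂ A]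
    [AddCommGroup E] [Module ℂ E] [PartialOrder A] [SMul Aᵐᵒᵖ E] [Norm A] [Norm E]
    extends Inner A E where
  inner_add_right {x} {y} {z} : inner x (y + z) = inner x y + inner x z
  inner_self_nonneg {x} : 0 ≤ inner x x
  inner_self {x} : inner x x = 0 ↔ x = 0
  inner_op_smul_right {a : A} {x y : E} : inner x (y <• a) = inner x y * a
  inner_smul_right_complex {z : ℂ} {x} {y} : inner x (z • y) = z • inner x y
  star_inner x y : star (inner x y) = inner y x
  norm_eq_sqrt_norm_inner_self x : ‖x‖ = √‖inner x x‖

/-!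
Apply `δ` to the identity `∑ᵢ x ⟨yᵢ, zᵢ⟩ = 0` for `x ∈ dom δ`: the Leibniz rule turns this into
`x T = 0`, where `T = ∑ᵢ (⟨δ yᵢ, zᵢ⟩ + ⟨yᵢ, δ zᵢ⟩)`, so `⟨u, x⟩ T = 0` for every `u`. By density of
`dom δ` and continuity of the inner product, `⟨u, v⟩ T = 0` for all `u, v ∈ E`; by fullness
`b T = 0` for all `b ∈ B`, and `T* T = 0` forces `T = 0`.
-/

namespace RightCStarModule

/-- The derivation `⟨y, z⟩ ↦ ⟨δ y, z⟩ + ⟨y, δ z⟩` induced on inner products, as a function of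
the representing pair `(y, z)`. -/
def innerDerivation (B : Type*) {E : Type*} [Add B] [AddCommGroup E] [Module ℂ E] [Inner B E]
    {D : Submodule ℂ E} (δ : D →ₗ[ℂ] E) (y z : D) : B :=
  inner B (δ y) (z : E) + inner B (y : E) (δ z)

section Algebra

variable {B E : Type*} [NonUnitalRing B] [StarRing B] [Module ℂ B] [PartialOrder B] [Norm B]
  [AddCommGroup E] [Module ℂ E] [SMul Bᵐᵒᵖ E] [Norm E] [RightCStarModule B E]

def innerₗ (x : E) : E →ₗ[ℂ] B where
  toFun y := inner B x y
  map_add' _ _ := inner_add_right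
  map_smul' _ _ := inner_smul_right_complex

lemma inner_zero_right {x : E} : inner B x (0 : E) = 0 := (innerₗ x).map_zero

lemma inner_sum_right {ι : Type*} {s : Finset ι} {x : E} {y : ι → E} :
    inner B x (∑ i ∈ s, y i) = ∑ i ∈ s, inner B x (y i) :=
  map_sum (innerₗ x) y s

variable (B) in
lemma ext_inner_left {v w : E} (h : ∀ u : E, inner B u v = inner B u w) : v = w := by
  have : inner B (v - w) (v - w) = 0 := by
    change innerₗ (v - w) (v - w) = 0
    rw [map_sub, sub_eq_zero]
    exact h (v - w)
  exact sub_eq_zero.mp (inner_self.mp this)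

lemma op_smul_zero (x : E) : x <• (0 : B) = 0 :=
  ext_inner_left B fun u => by rw [inner_op_smul_right, inner_zero_right, mul_zero]

lemma op_smul_add (x : E) (a b : B) : x <• (a + b) = x <• a + x <• b :=
  ext_inner_left B fun u => by rw [inner_op_smul_right, inner_add_right, inner_op_smul_right,
    inner_op_smul_right, mul_add]

lemma op_smul_sum {ι : Type*} (s : Finset ι) (x : E) (a : ι → B) :
    x <• ∑ i ∈ s, a i = ∑ i ∈ s, x <• a i :=
  ext_inner_left B fun u => by
    simp only [inner_op_smul_right, inner_sum_right, Finset.mul_sum]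

lemma op_smul_sum_innerDerivation_eq_zero {D : Submodule ℂ E} (δ : D →ₗ[ℂ] E)
    (hinv : ∀ x y z : D, (x : E) <• (inner B (y : E) (z : E) : B) ∈ D)
    (htern : ∀ x y z : D,
      δ ⟨(x : E) <• (inner B (y : E) (z : E) : B), hinv x y z⟩ =
        δ x <• (inner B (y : E) (z : E) : B) + (x : E) <• (inner B (δ y) (z : E) : B)
          + (x : E) <• (inner B (y : E) (δ z) : B))
    {ι : Type*} {s : Finset ι} {y z : ι → D}
    (hsum : ∑ i ∈ s, inner B (y i : E) (z i : E) = 0) (x : D) :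
    (x : E) <• ∑ i ∈ s, innerDerivation B δ (y i) (z i) = 0 := by
  let w : ι → D := fun i => ⟨(x : E) <• inner B (y i : E) (z i : E), hinv x (y i) (z i)⟩
  have hw : ∑ i ∈ s, w i = 0 := Subtype.ext <| by
    rw [Submodule.coe_sum, ← op_smul_sum, hsum, op_smul_zero, Submodule.coe_zero]
  calc (x : E) <• ∑ i ∈ s, innerDerivation B δ (y i) (z i)
      = (δ x <• ∑ i ∈ s, inner B (y i : E) (z i : E))
          + ∑ i ∈ s, (x : E) <• innerDerivation B δ (y i) (z i) := by
        rw [hsum, op_smul_zero, zero_add, op_smul_sum]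
    _ = ∑ i ∈ s, δ (w i) := by
        simp only [op_smul_sum, ← Finset.sum_add_distrib, w, htern, innerDerivation, op_smul_add,
          add_assoc]
    _ = 0 := by rw [← map_sum, hw, map_zero]

end Algebra

section Topology

variable {B E : Type*} [NonUnitalCStarAlgebra B] [PartialOrder B] [StarOrderedRing B]
  [NormedAddCommGroup E] [NormedSpace ℂ E] [SMul Bᵐᵒᵖ E] [RightCStarModule B E]

/-- A right Hilbert `B`-module is a Hilbert module over `Bᵐᵒᵖ` in Mathlib's (left) convention,
which gives access to the Cauchy–Schwarz inequality proved there. -/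
abbrev toCStarModuleMulOpposite : CStarModule Bᵐᵒᵖ E where
  inner x y := MulOpposite.op (inner B x y)
  inner_add_right {_ _ _} := by rw [inner_add_right, MulOpposite.op_add]
  inner_self_nonneg := MulOpposite.unop_nonneg.mp inner_self_nonneg
  inner_self {_} := by rw [MulOpposite.op_eq_zero_iff, inner_self]
  inner_op_smul_right {a _ _} := by
    rw [← MulOpposite.op_unop a, inner_op_smul_right, MulOpposite.op_mul]
  inner_smul_right_complex {_ _ _} := by rw [inner_smul_right_complex, MulOpposite.op_smul]
  star_inner x y := by rw [← MulOpposite.op_star, star_inner]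
  norm_eq_sqrt_norm_inner_self x := by
    rw [MulOpposite.norm_op, norm_eq_sqrt_norm_inner_self (A := B)]

lemma continuous_inner_right (x : E) : Continuous fun y : E => inner B x y := by
  let _ := toCStarModuleMulOpposite (B := B) (E := E)
  exact MulOpposite.continuous_unop.comp
    (CStarModule.continuous_inner.comp (Continuous.prodMk_right x))

end Topology

end RightCStarModule

lemma CStarRing.eq_zero_of_forall_mul_eq_zero_of_dense_span {B : Type*} [NonUnitalCStarAlgebra B]
    {S : Set B} (hS : (Submodule.span ℂ S).topologicalClosure = ⊤) {T : B} (h : ∀ s ∈ S, s * T = 0) :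
    T = 0 := by
  let rightMul := (ContinuousLinearMap.mul ℂ B).flip T
  have hspan : Submodule.span ℂ S ≤ LinearMap.ker (rightMul : B →ₗ[ℂ] B) :=
    Submodule.span_le.mpr h
  have hker : ⊤ ≤ LinearMap.ker (rightMul : B →ₗ[ℂ] B) := hS ▸
    Submodule.topologicalClosure_minimal _ hspan (ContinuousLinearMap.isClosed_ker rightMul)
  exact (star_mul_self_eq_zero_iff T).mp (hker Submodule.mem_top)

open RightCStarModule in
theorem stmt9_general {B E : Type*}
    [NonUnitalCStarAlgebra B] [PartialOrder B] [StarOrderedRing B]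
    [NormedAddCommGroup E] [NormedSpace ℂ E] [SMul Bᵐᵒᵖ E] [RightCStarModule B E]
    (hfull : (Submodule.span ℂ {b : B | ∃ x y : E, (inner B x y : B) = b}).topologicalClosure = ⊤)
    (D : Submodule ℂ E) (hdense : Dense (D : Set E)) (δ : D →ₗ[ℂ] E)
    (hinv : ∀ x y z : D, (x : E) <• (inner B (y : E) (z : E) : B) ∈ D)
    (htern : ∀ x y z : D,
      δ ⟨(x : E) <• (inner B (y : E) (z : E) : B), hinv x y z⟩ =
        δ x <• (inner B (y : E) (z : E) : B) + (x : E) <• (inner B (δ y) (z : E) : B)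
          + (x : E) <• (inner B (y : E) (δ z) : B)) :
    ∀ {ι : Type} (s : Finset ι) (y z : ι → D),
      (∑ i ∈ s, (inner B (y i : E) (z i : E) : B)) = 0 →
      (∑ i ∈ s, ((inner B (δ (y i)) (z i : E) : B) + (inner B (y i : E) (δ (z i)) : B))) = 0 := by
  intro ι s y z hsum
  let T : B := ∑ i ∈ s, innerDerivation B δ (y i) (z i)
  have hD : ∀ u : E, ∀ v ∈ D, inner B u v * T = 0 := fun u v hv => by
    rw [← inner_op_smul_right,
      op_smul_sum_innerDerivation_eq_zero δ hinv htern hsum ⟨v, hv⟩,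
      RightCStarModule.inner_zero_right]
  have hE : ∀ u v : E, inner B u v * T = 0 := fun u =>
    congrFun <| ((continuous_inner_right u).mul continuous_const).ext_on hdense
      continuous_const (hD u)
  exact CStarRing.eq_zero_of_forall_mul_eq_zero_of_dense_span hfull <| by
    rintro _ ⟨u, v, rfl⟩
    exact hE u v

/-- Well-definedness of the induced derivation on inner products. -/
theorem stmt9 {B E : Type*}
    [NonUnitalCStarAlgebra B] [PartialOrder B] [StarOrderedRing B]
    [NormedAddCommGroup E] [NormedSpace ℂ E] [SMul Bᵐᵒᵖ E] [RightCStarModule B E]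
    [CompleteSpace E]
    (hfull : (Submodule.span ℂ {b : B | ∃ x y : E, (inner B x y : B) = b}).topologicalClosure = ⊤)
    (D : Submodule ℂ E) (hdense : Dense (D : Set E)) (δ : D →ₗ[ℂ] E)
    (hinv : ∀ x y z : D, (x : E) <• (inner B (y : E) (z : E) : B) ∈ D)
    (htern : ∀ x y z : D,
      δ ⟨(x : E) <• (inner B (y : E) (z : E) : B), hinv x y z⟩ =
        δ x <• (inner B (y : E) (z : E) : B) + (x : E) <• (inner B (δ y) (z : E) : B)
          + (x : E) <• (inner B (y : E) (δ z) : B)) :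
    ∀ {ι : Type} (s : Finset ι) (y z : ι → D),
      (∑ i ∈ s, (inner B (y i : E) (z i : E) : B)) = 0 →
      (∑ i ∈ s, ((inner B (δ (y i)) (z i : E) : B) + (inner B (y i : E) (δ (z i)) : B))) = 0 :=
  stmt9_general hfull D hdense δ hinv htern
end

section
/- Every ternary derivation δ of a full Hilbert B-module E is a generalized derivation: there is a unique derivation d_δ on the dense domain span⟨dom(δ), dom(δ)⟩ ⊂ B satisfying d_δ(⟨x,y⟩) = ⟨δ(x), y⟩ + ⟨x, δ(y)⟩ for x, y ∈ dom(δ); moreover δ(xb) = δ(x)b + x·d_δ(b) for x ∈ dom(δ), b ∈ span⟨dom(δ),dom(δ)⟩, and d_δ is a *-derivation (d_δ(b*) = d_δ(b)*). -/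
/-! The derivation `d_δ` is read off from the submodule `G ⊆ B × B` spanned by the pairs
`(⟨x, y⟩, ⟨δ x, y⟩ + ⟨x, δ y⟩)`. The ternary Leibniz rule propagates from these generators to all
of `G`: for `(b, c) ∈ G` and `z ∈ dom δ` one has `z b ∈ dom δ` and `δ (z b) = δ z b + z c`.
Taking `b = 0` gives `z c = 0` on the dense domain, and since `E` is full the right action is
faithful, so `c = 0`: `G` is the graph of a linear map on `span⟨dom δ, dom δ⟩`. Comparing the two
expansions of `δ (z (b b')) = δ ((z b) b')` and using faithfulness once more gives the Leibniz rule,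
and `d_δ` is a `*`-derivation because `G` is invariant under `(b, c) ↦ (b*, c*)`. -/

open scoped RightActions

/-- The December 2024 Mathlib `CStarModule` (right Hilbert modules: `SMul Aᵐᵒᵖ E`, inner product
`A`-linear in the second argument for the right action), which Mathlib has since replaced by
left modules. -/
class HilbertCStarModuleOld (A E : Type*) [NonUnitalSemiring A] [StarRing A] [Module ℂ A]
    [AddCommGroup E] [Module ℂ E] [PartialOrder A] [SMul Aᵐᵒᵖ E] [Norm A] [Norm E]
    extends Inner A E where
  inner_add_right {x} {y} {z} : inner x (y + z) = inner x y + inner x z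
  inner_self_nonneg {x} : 0 ≤ inner x x
  inner_self {x} : inner x x = 0 ↔ x = 0
  inner_op_smul_right {a : A} {x y : E} : inner x (y <• a) = inner x y * a
  inner_smul_right_complex {z : ℂ} {x} {y} : inner x (z • y) = z • inner x y
  star_inner x y : star (inner x y) = inner y x
  norm_eq_sqrt_norm_inner_self x : ‖x‖ = √‖inner x x‖

namespace HilbertCStarModuleOld

open Submodule

section Algebra

variable {A E : Type*} [NonUnitalRing A] [StarRing A] [Module ℂ A] [PartialOrder A] [Norm A]
  [AddCommGroup E] [Module ℂ E] [SMul Aᵐᵒᵖ E] [Norm E] [HilbertCStarModuleOld A E]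

variable (A) in
@[simps]
def innerRightₗ (x : E) : E →ₗ[ℂ] A where
  toFun := inner A x
  map_add' _ _ := inner_add_right
  map_smul' _ _ := inner_smul_right_complex

theorem ext_inner_left {u v : E} (h : ∀ z : E, inner A z u = inner A z v) : u = v := by
  have : inner A (u - v) (u - v) = 0 := by
    rw [← innerRightₗ_apply, map_sub, innerRightₗ_apply, innerRightₗ_apply, h, sub_self]
  exact sub_eq_zero.mp (inner_self.mp this)

theorem inner_op_smul_left (a : A) (x y : E) : inner A (x <• a) y = star a * inner A x y := by
  rw [← star_inner y, inner_op_smul_right, star_mul, star_inner]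

theorem op_add_smul (x : E) (a b : A) : x <• (a + b) = x <• a + x <• b :=
  ext_inner_left (A := A) fun z => by simp only [inner_op_smul_right, inner_add_right, mul_add]

theorem op_zero_smul (x : E) : x <• (0 : A) = 0 := by
  simpa using op_add_smul x (0 : A) 0

theorem op_sub_smul (x : E) (a b : A) : x <• (a - b) = x <• a - x <• b :=
  eq_sub_of_add_eq (by rw [← op_add_smul, sub_add_cancel])

theorem op_smul_add (x y : E) (a : A) : (x + y) <• a = x <• a + y <• a :=
  ext_inner_left (A := A) fun z => by simp only [inner_op_smul_right, inner_add_right, add_mul]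

theorem op_mul_smul (x : E) (a b : A) : x <• (a * b) = x <• a <• b :=
  ext_inner_left (A := A) fun z => by simp only [inner_op_smul_right, mul_assoc]

def orbitMapₗ [SMulCommClass ℂ A A] (x : E) : A →ₗ[ℂ] E where
  toFun a := x <• a
  map_add' := op_add_smul x
  map_smul' c a := ext_inner_left (A := A) fun z => by
    simp only [inner_op_smul_right, inner_smul_right_complex, mul_smul_comm, RingHom.id_apply]

def opSMulₗ [IsScalarTower ℂ A A] (a : A) : E →ₗ[ℂ] E where
  toFun x := x <• a
  map_add' x y := op_smul_add x y a
  map_smul' c x := ext_inner_left (A := A) fun z => by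
    simp only [inner_op_smul_right, inner_smul_right_complex, smul_mul_assoc, RingHom.id_apply]

variable (A) in
abbrev innerSpan (D : Submodule ℂ E) : Submodule ℂ A :=
  span ℂ {b | ∃ x y : D, inner A (x : E) (y : E) = b}

theorem innerSpan_ext {D : Submodule ℂ E} {M : Type*} [AddCommGroup M] [Module ℂ M]
    {f g : innerSpan A D →ₗ[ℂ] M}
    (h : ∀ x y : D, f ⟨inner A (x : E) (y : E), subset_span ⟨x, y, rfl⟩⟩ =
      g ⟨inner A (x : E) (y : E), subset_span ⟨x, y, rfl⟩⟩) : f = g :=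
  LinearMap.ext_on span_span_coe_preimage fun b ⟨x, y, hb⟩ => by
    obtain rfl : b = ⟨_, subset_span ⟨x, y, rfl⟩⟩ := Subtype.ext hb.symm
    exact h x y

variable (A) in
structure IsTernaryDerivation {D : Submodule ℂ E} (δ : D →ₗ[ℂ] E) : Prop where
  op_smul_inner_mem (x y z : D) : (x : E) <• inner A (y : E) (z : E) ∈ D
  map_op_smul_inner (x y z : D) : δ ⟨(x : E) <• inner A (y : E) (z : E), op_smul_inner_mem x y z⟩ =
    δ x <• inner A (y : E) (z : E) + (x : E) <• inner A (δ y) (z : E)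
      + (x : E) <• inner A (y : E) (δ z)

variable (A) in
def derivationGraph {D : Submodule ℂ E} (δ : D →ₗ[ℂ] E) : Submodule ℂ (A × A) :=
  span ℂ {p | ∃ x y : D,
    (inner A (x : E) (y : E), inner A (δ x) (y : E) + inner A (x : E) (δ y)) = p}

variable {D : Submodule ℂ E} {δ : D →ₗ[ℂ] E}

theorem innerSpan_le_map_fst_derivationGraph :
    innerSpan A D ≤ (derivationGraph A δ).map (LinearMap.fst ℂ A A) :=
  span_le.mpr fun _ ⟨x, y, hb⟩ => ⟨_, subset_span ⟨x, y, rfl⟩, hb⟩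

variable (A) in
/-- `Submodule.toLinearPMap` is the zero map unless its argument is the graph of a function, which
is `IsTernaryDerivation.snd_eq_zero_of_mem_derivationGraph`. -/
noncomputable def innerDerivation (δ : D →ₗ[ℂ] E) : innerSpan A D →ₗ[ℂ] A :=
  (derivationGraph A δ).toLinearPMap.toFun ∘ₗ inclusion innerSpan_le_map_fst_derivationGraph

theorem IsTernaryDerivation.exists_map_op_smul [SMulCommClass ℂ A A]
    (hδ : IsTernaryDerivation A δ) {p : A × A} (hp : p ∈ derivationGraph A δ) (z : D) :
    ∃ h : (z : E) <• p.1 ∈ D, δ ⟨(z : E) <• p.1, h⟩ = δ z <• p.1 + (z : E) <• p.2 := by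
  let Φ : A × A →ₗ[ℂ] E × E := (orbitMapₗ (z : E) ∘ₗ LinearMap.fst ℂ A A).prod
    (orbitMapₗ (δ z) ∘ₗ LinearMap.fst ℂ A A + orbitMapₗ (z : E) ∘ₗ LinearMap.snd ℂ A A)
  have hle : derivationGraph A δ ≤ (LinearPMap.mk D δ).graph.comap Φ := by
    refine span_le.mpr ?_
    rintro _ ⟨x, y, rfl⟩
    refine (LinearPMap.mem_graph_iff _).mpr ⟨⟨_, hδ.op_smul_inner_mem z x y⟩, by rfl, ?_⟩
    change δ _ = δ z <• (_ : A) + (z : E) <• (_ + _ : A)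
    rw [hδ.map_op_smul_inner, add_assoc]
    exact congrArg _ ((orbitMapₗ (z : E)).map_add _ _).symm
  obtain ⟨⟨w, hw⟩, hw₁, hw₂⟩ := (LinearPMap.mem_graph_iff _).mp (hle hp)
  obtain rfl : w = (z : E) <• p.1 := hw₁
  exact ⟨hw, hw₂⟩

theorem derivationGraph_le_comap_star [StarModule ℂ A] :
    derivationGraph A δ ≤
      (derivationGraph A δ).comap (starLinearEquiv ℂ (A := A × A)).toLinearMap := by
  refine span_le.mpr ?_
  rintro _ ⟨x, y, rfl⟩
  refine subset_span ⟨y, x, Prod.ext ?_ ?_⟩ <;> simp [star_inner, add_comm]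

end Algebra

section CStarAlgebra

variable {B E : Type*} [NonUnitalCStarAlgebra B] [PartialOrder B]
  [NormedAddCommGroup E] [NormedSpace ℂ E] [SMul Bᵐᵒᵖ E] [HilbertCStarModuleOld B E]

variable (B E) in
def IsFull : Prop :=
  (span ℂ {b : B | ∃ x y : E, inner B x y = b}).topologicalClosure = ⊤

theorem norm_sq_eq (x : E) : ‖x‖ ^ 2 = ‖inner B x x‖ := by
  rw [norm_eq_sqrt_norm_inner_self (A := B) x, Real.sq_sqrt (norm_nonneg _)]

theorem norm_op_smul_le (x : E) (a : B) : ‖x <• a‖ ≤ ‖x‖ * ‖a‖ := by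
  have key : ‖x <• a‖ ^ 2 ≤ (‖x‖ * ‖a‖) ^ 2 := calc
    ‖x <• a‖ ^ 2 = ‖star a * (inner B x x * a)‖ := by
      rw [norm_sq_eq (B := B), inner_op_smul_left, inner_op_smul_right]
    _ ≤ ‖a‖ * (‖inner B x x‖ * ‖a‖) :=
      (norm_mul_le _ _).trans (by rw [norm_star]; gcongr; exact norm_mul_le _ _)
    _ = (‖x‖ * ‖a‖) ^ 2 := by rw [← norm_sq_eq]; ring
  exact (pow_le_pow_iff_left₀ (norm_nonneg _) (by positivity) two_ne_zero).mp key

theorem continuous_op_smul (a : B) : Continuous fun x : E => x <• a :=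
  AddMonoidHomClass.continuous_of_bound (opSMulₗ a) ‖a‖ fun x =>
    (norm_op_smul_le x a).trans_eq (mul_comm _ _)

theorem eq_zero_of_forall_op_smul_eq_zero (hfull : IsFull B E) {c : B} (h : ∀ x : E, x <• c = 0) : c = 0 := by
  let mulRight : B →L[ℂ] B := (ContinuousLinearMap.mul ℂ B).flip c
  have hspan :
      span ℂ {b : B | ∃ x y : E, inner B x y = b} ≤ LinearMap.ker (mulRight : B →ₗ[ℂ] B) := by
    refine span_le.mpr ?_
    rintro _ ⟨x, y, rfl⟩
    change inner B x y * c = 0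
    rw [← inner_op_smul_right, h y]
    exact (innerRightₗ B x).map_zero
  have htop : ⊤ ≤ LinearMap.ker (mulRight : B →ₗ[ℂ] B) :=
    hfull ▸ topologicalClosure_minimal _ hspan mulRight.isClosed_ker
  exact (CStarRing.star_mul_self_eq_zero_iff c).mp (htop mem_top)

theorem eq_zero_of_forall_mem_op_smul_eq_zero
    (hfull : IsFull B E) {D : Submodule ℂ E} (hD : Dense (D : Set E)) {c : B}
    (h : ∀ x ∈ D, x <• c = 0) : c = 0 :=
  eq_zero_of_forall_op_smul_eq_zero hfull fun x =>
    congrFun ((continuous_op_smul c).ext_on hD continuous_const h) x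

variable {D : Submodule ℂ E} {δ : D →ₗ[ℂ] E}

namespace IsTernaryDerivation

theorem snd_eq_zero_of_mem_derivationGraph (hδ : IsTernaryDerivation B δ) (hfull : IsFull B E)
    (hD : Dense (D : Set E)) :
    ∀ p ∈ derivationGraph B δ, p.1 = 0 → p.2 = 0 := by
  rintro ⟨_, c⟩ hp rfl
  refine eq_zero_of_forall_mem_op_smul_eq_zero hfull hD fun z hz => ?_
  obtain ⟨hz0, hδz0⟩ := hδ.exists_map_op_smul hp ⟨z, hz⟩
  have hzero : (⟨z <• (0 : B), hz0⟩ : D) = 0 := Subtype.ext (op_zero_smul z)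
  rw [hzero, map_zero] at hδz0
  simpa only [op_zero_smul, zero_add] using hδz0.symm

theorem mem_derivationGraph (hδ : IsTernaryDerivation B δ) (hfull : IsFull B E)
    (hD : Dense (D : Set E)) (b : innerSpan B D) :
    ((b : B), innerDerivation B δ b) ∈ derivationGraph B δ :=
  mem_graph_toLinearPMap (hδ.snd_eq_zero_of_mem_derivationGraph hfull hD)
    (inclusion innerSpan_le_map_fst_derivationGraph b)

theorem innerDerivation_eq_of_mem (hδ : IsTernaryDerivation B δ) (hfull : IsFull B E)
    (hD : Dense (D : Set E)) {b : innerSpan B D} {c : B}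
    (hc : ((b : B), c) ∈ derivationGraph B δ) : innerDerivation B δ b = c :=
  sub_eq_zero.mp <| hδ.snd_eq_zero_of_mem_derivationGraph hfull hD _
    (sub_mem (hδ.mem_derivationGraph hfull hD b) hc) (sub_self _)

theorem innerDerivation_inner (hδ : IsTernaryDerivation B δ) (hfull : IsFull B E)
    (hD : Dense (D : Set E)) (x y : D) :
    innerDerivation B δ ⟨inner B (x : E) (y : E), subset_span ⟨x, y, rfl⟩⟩ =
      inner B (δ x) (y : E) + inner B (x : E) (δ y) :=
  hδ.innerDerivation_eq_of_mem hfull hD (subset_span ⟨x, y, rfl⟩)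

theorem op_smul_mem (hδ : IsTernaryDerivation B δ) (hfull : IsFull B E)
    (hD : Dense (D : Set E)) (x : D) (b : innerSpan B D) : (x : E) <• (b : B) ∈ D :=
  (hδ.exists_map_op_smul (hδ.mem_derivationGraph hfull hD b) x).1

theorem map_op_smul (hδ : IsTernaryDerivation B δ) (hfull : IsFull B E)
    (hD : Dense (D : Set E)) (x : D) (b : innerSpan B D) (h : (x : E) <• (b : B) ∈ D) :
    δ ⟨(x : E) <• (b : B), h⟩ = δ x <• (b : B) + (x : E) <• innerDerivation B δ b :=
  (hδ.exists_map_op_smul (hδ.mem_derivationGraph hfull hD b) x).2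

theorem innerDerivation_mul (hδ : IsTernaryDerivation B δ) (hfull : IsFull B E)
    (hD : Dense (D : Set E)) (b b' : innerSpan B D) (h : (b : B) * b' ∈ innerSpan B D) :
    innerDerivation B δ ⟨(b : B) * b', h⟩ =
      innerDerivation B δ b * b' + b * innerDerivation B δ b' := by
  refine sub_eq_zero.mp (eq_zero_of_forall_mem_op_smul_eq_zero hfull hD fun z hz => ?_)
  let zb : D := ⟨z <• (b : B), hδ.op_smul_mem hfull hD ⟨z, hz⟩ b⟩
  have hassoc : (⟨z <• ((b : B) * b'), hδ.op_smul_mem hfull hD ⟨z, hz⟩ ⟨_, h⟩⟩ : D) =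
      ⟨zb <• (b' : B), hδ.op_smul_mem hfull hD zb b'⟩ :=
    Subtype.ext (op_mul_smul z (b : B) b')
  have key := hδ.map_op_smul hfull hD ⟨z, hz⟩ ⟨_, h⟩ (hδ.op_smul_mem hfull hD ⟨z, hz⟩ ⟨_, h⟩)
  rw [hassoc, hδ.map_op_smul hfull hD zb, hδ.map_op_smul hfull hD ⟨z, hz⟩] at key
  simp only [zb, op_smul_add, ← op_mul_smul, add_assoc] at key
  rw [op_sub_smul, op_add_smul, add_left_cancel key, sub_self]

theorem innerDerivation_star (hδ : IsTernaryDerivation B δ) (hfull : IsFull B E)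
    (hD : Dense (D : Set E)) (b : innerSpan B D) (h : star (b : B) ∈ innerSpan B D) :
    innerDerivation B δ ⟨star (b : B), h⟩ = star (innerDerivation B δ b) :=
  hδ.innerDerivation_eq_of_mem hfull hD
    (derivationGraph_le_comap_star (hδ.mem_derivationGraph hfull hD b))

end IsTernaryDerivation

end CStarAlgebra

end HilbertCStarModuleOld

theorem stmt10_general {B E : Type*}
    [NonUnitalCStarAlgebra B] [PartialOrder B]
    [NormedAddCommGroup E] [NormedSpace ℂ E] [SMul Bᵐᵒᵖ E] [HilbertCStarModuleOld B E]
    (hfull : (Submodule.span ℂ {b : B | ∃ x y : E, (inner B x y : B) = b}).topologicalClosure = ⊤)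
    (D : Submodule ℂ E) (hdense : Dense (D : Set E)) (δ : D →ₗ[ℂ] E)
    (hinv : ∀ x y z : D, (x : E) <• (inner B (y : E) (z : E) : B) ∈ D)
    (htern : ∀ x y z : D,
      δ ⟨(x : E) <• (inner B (y : E) (z : E) : B), hinv x y z⟩ =
        δ x <• (inner B (y : E) (z : E) : B) + (x : E) <• (inner B (δ y) (z : E) : B)
          + (x : E) <• (inner B (y : E) (δ z) : B)) :
    ∃ d : (Submodule.span ℂ {b : B | ∃ x y : D, (inner B (x : E) (y : E) : B) = b}) →ₗ[ℂ] B,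
      -- `d` satisfies (3.1)
      (∀ x y : D, d ⟨(inner B (x : E) (y : E) : B), Submodule.subset_span ⟨x, y, rfl⟩⟩ =
          (inner B (δ x) (y : E) : B) + (inner B (x : E) (δ y) : B)) ∧
      -- `d` is the unique linear map on this domain satisfying (3.1)
      (∀ d' : (Submodule.span ℂ {b : B | ∃ x y : D, (inner B (x : E) (y : E) : B) = b}) →ₗ[ℂ] B,
        (∀ x y : D, d' ⟨(inner B (x : E) (y : E) : B), Submodule.subset_span ⟨x, y, rfl⟩⟩ =
          (inner B (δ x) (y : E) : B) + (inner B (x : E) (δ y) : B)) → d' = d) ∧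
      -- `d` turns `δ` into a `d`-derivation
      (∀ (x : D) (b : Submodule.span ℂ {b : B | ∃ x y : D, (inner B (x : E) (y : E) : B) = b})
        (h : (x : E) <• (b : B) ∈ D),
        δ ⟨(x : E) <• (b : B), h⟩ = δ x <• (b : B) + (x : E) <• d b) ∧
      -- `d` is a derivation (Leibniz rule)
      (∀ (b b' : Submodule.span ℂ {b : B | ∃ x y : D, (inner B (x : E) (y : E) : B) = b})
        (h : (b : B) * (b' : B) ∈
          Submodule.span ℂ {b : B | ∃ x y : D, (inner B (x : E) (y : E) : B) = b}),
        d ⟨(b : B) * (b' : B), h⟩ = d b * (b' : B) + (b : B) * d b') ∧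
      -- `d` is a `*`-derivation
      (∀ (b : Submodule.span ℂ {b : B | ∃ x y : D, (inner B (x : E) (y : E) : B) = b})
        (h : star (b : B) ∈
          Submodule.span ℂ {b : B | ∃ x y : D, (inner B (x : E) (y : E) : B) = b}),
        d ⟨star (b : B), h⟩ = star (d b)) := by
  have hδ : HilbertCStarModuleOld.IsTernaryDerivation B δ := ⟨hinv, htern⟩
  refine ⟨HilbertCStarModuleOld.innerDerivation B δ, hδ.innerDerivation_inner hfull hdense,
    fun d' hd' => HilbertCStarModuleOld.innerSpan_ext fun x y => ?_, hδ.map_op_smul hfull hdense,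
    hδ.innerDerivation_mul hfull hdense, hδ.innerDerivation_star hfull hdense⟩
  rw [hd', hδ.innerDerivation_inner hfull hdense]

/-- Every ternary derivation of a full Hilbert module is a generalized derivation:
existence and uniqueness of the `*`-derivation `d_δ` on `span⟨dom δ, dom δ⟩`. -/
theorem stmt10 {B E : Type*}
    [NonUnitalCStarAlgebra B] [PartialOrder B] [StarOrderedRing B]
    [NormedAddCommGroup E] [NormedSpace ℂ E] [SMul Bᵐᵒᵖ E] [HilbertCStarModuleOld B E]
    [CompleteSpace E]
    (hfull : (Submodule.span ℂ {b : B | ∃ x y : E, (inner B x y : B) = b}).topologicalClosure = ⊤)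
    (D : Submodule ℂ E) (hdense : Dense (D : Set E)) (δ : D →ₗ[ℂ] E)
    (hinv : ∀ x y z : D, (x : E) <• (inner B (y : E) (z : E) : B) ∈ D)
    (htern : ∀ x y z : D,
      δ ⟨(x : E) <• (inner B (y : E) (z : E) : B), hinv x y z⟩ =
        δ x <• (inner B (y : E) (z : E) : B) + (x : E) <• (inner B (δ y) (z : E) : B)
          + (x : E) <• (inner B (y : E) (δ z) : B)) :
    ∃ d : (Submodule.span ℂ {b : B | ∃ x y : D, (inner B (x : E) (y : E) : B) = b}) →ₗ[ℂ] B,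
      -- `d` satisfies (3.1)
      (∀ x y : D, d ⟨(inner B (x : E) (y : E) : B), Submodule.subset_span ⟨x, y, rfl⟩⟩ =
          (inner B (δ x) (y : E) : B) + (inner B (x : E) (δ y) : B)) ∧
      -- `d` is the unique linear map on this domain satisfying (3.1)
      (∀ d' : (Submodule.span ℂ {b : B | ∃ x y : D, (inner B (x : E) (y : E) : B) = b}) →ₗ[ℂ] B,
        (∀ x y : D, d' ⟨(inner B (x : E) (y : E) : B), Submodule.subset_span ⟨x, y, rfl⟩⟩ =
          (inner B (δ x) (y : E) : B) + (inner B (x : E) (δ y) : B)) → d' = d) ∧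
      -- `d` turns `δ` into a `d`-derivation
      (∀ (x : D) (b : Submodule.span ℂ {b : B | ∃ x y : D, (inner B (x : E) (y : E) : B) = b})
        (h : (x : E) <• (b : B) ∈ D),
        δ ⟨(x : E) <• (b : B), h⟩ = δ x <• (b : B) + (x : E) <• d b) ∧
      -- `d` is a derivation (Leibniz rule)
      (∀ (b b' : Submodule.span ℂ {b : B | ∃ x y : D, (inner B (x : E) (y : E) : B) = b})
        (h : (b : B) * (b' : B) ∈
          Submodule.span ℂ {b : B | ∃ x y : D, (inner B (x : E) (y : E) : B) = b}),
        d ⟨(b : B) * (b' : B), h⟩ = d b * (b' : B) + (b : B) * d b') ∧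
      -- `d` is a `*`-derivation
      (∀ (b : Submodule.span ℂ {b : B | ∃ x y : D, (inner B (x : E) (y : E) : B) = b})
        (h : star (b : B) ∈
          Submodule.span ℂ {b : B | ∃ x y : D, (inner B (x : E) (y : E) : B) = b}),
        d ⟨star (b : B), h⟩ = star (d b)) :=
  stmt10_general hfull D hdense δ hinv htern
end

section
/- The map d_δ defined by d_δ(⟨x,y⟩) = ⟨δ(x),y⟩ + ⟨x,δ(y)⟩ for a ternary derivation δ satisfies the Leibniz rule: d_δ(bb') = d_δ(b)b' + b·d_δ(b') for all b, b' ∈ span⟨dom(δ), dom(δ)⟩. -/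
/-!
Since `⟨x, y⟩ ⟨x', y'⟩ = ⟨x, y ⟨x', y'⟩⟩`, the inner products of elements of `dom δ` form a
multiplicatively closed set, and for two such generators the Leibniz rule is the ternary
derivation rule for `δ (y ⟨x', y'⟩)` paired with `x`. Both sides of the Leibniz rule are
bilinear in `(b, b')`, so it passes from the generators to their span.
-/

open scoped RightActions

section Leibniz

open Submodule

variable {R A : Type*} [CommSemiring R] [NonUnitalNonAssocSemiring A] [Module R A]
  [IsScalarTower R A A] [SMulCommClass R A A]

theorem Submodule.mul_mem_span_of_mul_mem {s : Set A} (hs : ∀ a ∈ s, ∀ c ∈ s, a * c ∈ s)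
    {a c : A} (ha : a ∈ span R s) (hc : c ∈ span R s) : a * c ∈ span R s := by
  have hspan : span R s = (NonUnitalAlgebra.adjoin R s).toSubmodule := by
    rw [NonUnitalAlgebra.adjoin_eq_span,
      ← Subsemigroup.coe_set_mk s (fun ha hc => hs _ ha _ hc), Subsemigroup.closure_eq]
  simp only [hspan, NonUnitalSubalgebra.mem_toSubmodule] at ha hc ⊢
  exact mul_mem ha hc

theorem LinearMap.leibniz_on_span {s : Set A} (hs : ∀ a ∈ s, ∀ c ∈ s, a * c ∈ s)
    (d : span R s →ₗ[R] A)
    (hd : ∀ a (ha : a ∈ s) c (hc : c ∈ s), d ⟨a * c, subset_span (hs a ha c hc)⟩ =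
      d ⟨a, subset_span ha⟩ * c + a * d ⟨c, subset_span hc⟩)
    (a c : span R s) (h : (a : A) * c ∈ span R s) : d ⟨a * c, h⟩ = d a * c + a * d c := by
  obtain ⟨a, ha⟩ := a
  obtain ⟨c, hc⟩ := c
  have hmul {a c : A} (ha : a ∈ span R s) (hc : c ∈ span R s) := mul_mem_span_of_mul_mem hs ha hc
  induction ha, hc using span_induction₂ with
  | mem_mem a c ha hc => exact hd a ha c hc
  | zero_left c hc => simp [← ZeroMemClass.zero_def]
  | zero_right a ha => simp [← ZeroMemClass.zero_def]
  | add_left a a' c ha ha' hc iha iha' =>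
    simp only [add_mul, ← AddMemClass.mk_add_mk _ _ _ (hmul ha hc) (hmul ha' hc),
      ← AddMemClass.mk_add_mk _ _ _ ha ha', map_add, iha, iha']
    abel
  | add_right a c c' ha hc hc' ihc ihc' =>
    simp only [mul_add, ← AddMemClass.mk_add_mk _ _ _ (hmul ha hc) (hmul ha hc'),
      ← AddMemClass.mk_add_mk _ _ _ hc hc', map_add, ihc, ihc']
    abel
  | smul_left r a c ha hc ih =>
    simp only [smul_mul_assoc, ← SetLike.mk_smul_mk _ r _ (hmul ha hc),
      ← SetLike.mk_smul_mk _ r _ ha, map_smul, ih, smul_add]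
  | smul_right r a c ha hc ih =>
    simp only [mul_smul_comm, ← SetLike.mk_smul_mk _ r _ (hmul ha hc),
      ← SetLike.mk_smul_mk _ r _ hc, map_smul, ih, smul_add]

end Leibniz

section CStarModuleOld

variable (B : Type*) {E : Type*} [NonUnitalSemiring B] [StarRing B] [Module ℂ B] [PartialOrder B]
  [Norm B] [AddCommGroup E] [Module ℂ E] [Norm E] [SMul Bᵐᵒᵖ E] [CStarModuleOld B E]

def innerProducts (D : Submodule ℂ E) : Set B := {b : B | ∃ x y : D, inner B (x : E) (y : E) = b}

variable {B} {D : Submodule ℂ E}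

theorem mul_mem_innerProducts (hinv : ∀ x y z : D, (x : E) <• inner B (y : E) z ∈ D) :
    ∀ a ∈ innerProducts B D, ∀ c ∈ innerProducts B D, a * c ∈ innerProducts B D := by
  rintro _ ⟨x, y, rfl⟩ _ ⟨x', y', rfl⟩
  exact ⟨x, ⟨_, hinv y x' y'⟩, CStarModuleOld.inner_op_smul_right⟩

theorem leibniz_inner_mul_inner (δ : D →ₗ[ℂ] E)
    (hinv : ∀ x y z : D, (x : E) <• inner B (y : E) z ∈ D)
    (htern : ∀ x y z : D, δ ⟨(x : E) <• inner B (y : E) z, hinv x y z⟩ =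
      δ x <• inner B (y : E) z + (x : E) <• inner B (δ y) z + (x : E) <• inner B (y : E) (δ z))
    (d : Submodule.span ℂ (innerProducts B D) →ₗ[ℂ] B)
    (hd : ∀ x y : D, d ⟨inner B (x : E) y, Submodule.subset_span ⟨x, y, rfl⟩⟩ =
      inner B (δ x) y + inner B (x : E) (δ y))
    (x y x' y' : D)
    (h : inner B (x : E) y * inner B (x' : E) y' ∈ Submodule.span ℂ (innerProducts B D)) :
    d ⟨inner B (x : E) y * inner B (x' : E) y', h⟩ =
      d ⟨inner B (x : E) y, Submodule.subset_span ⟨x, y, rfl⟩⟩ * inner B (x' : E) y' +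
        inner B (x : E) y * d ⟨inner B (x' : E) y', Submodule.subset_span ⟨x', y', rfl⟩⟩ := by
  have hz : inner B (x : E) y * inner B (x' : E) y' = inner B (x : E) (y <• inner B (x' : E) y') :=
    CStarModuleOld.inner_op_smul_right.symm
  rw [show d ⟨_, h⟩ = d ⟨_, Submodule.subset_span ⟨x, ⟨_, hinv y x' y'⟩, rfl⟩⟩ from
    congrArg d (Subtype.ext hz), hd, hd, hd, htern]
  simp only [CStarModuleOld.inner_add_right, CStarModuleOld.inner_op_smul_right, add_mul, mul_add,
    add_assoc]

end CStarModuleOld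

theorem stmt11_general {B E : Type*}
    [NonUnitalCStarAlgebra B] [PartialOrder B]
    [NormedAddCommGroup E] [NormedSpace ℂ E] [SMul Bᵐᵒᵖ E] [CStarModuleOld B E]
    (D : Submodule ℂ E) (δ : D →ₗ[ℂ] E)
    (hinv : ∀ x y z : D, (x : E) <• (inner B (y : E) (z : E) : B) ∈ D)
    (htern : ∀ x y z : D,
      δ ⟨(x : E) <• (inner B (y : E) (z : E) : B), hinv x y z⟩ =
        δ x <• (inner B (y : E) (z : E) : B) + (x : E) <• (inner B (δ y) (z : E) : B)
          + (x : E) <• (inner B (y : E) (δ z) : B))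
    (d : (Submodule.span ℂ {b : B | ∃ x y : D, (inner B (x : E) (y : E) : B) = b}) →ₗ[ℂ] B)
    (hd : ∀ x y : D, d ⟨(inner B (x : E) (y : E) : B),
        Submodule.subset_span ⟨x, y, rfl⟩⟩ =
      (inner B (δ x) (y : E) : B) + (inner B (x : E) (δ y) : B)) :
    ∀ (b b' : Submodule.span ℂ {b : B | ∃ x y : D, (inner B (x : E) (y : E) : B) = b})
      (h : (b : B) * (b' : B) ∈ Submodule.span ℂ {b : B | ∃ x y : D, (inner B (x : E) (y : E) : B) = b}),
      d ⟨(b : B) * (b' : B), h⟩ = d b * (b' : B) + (b : B) * d b' := by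
  refine LinearMap.leibniz_on_span (mul_mem_innerProducts hinv) d ?_
  rintro _ ⟨x, y, rfl⟩ _ ⟨x', y', rfl⟩
  exact leibniz_inner_mul_inner δ hinv htern d hd x y x' y' _

/-- The induced map `d_δ` on `span⟨dom δ, dom δ⟩` satisfies the Leibniz rule. -/
theorem stmt11 {B E : Type*}
    [NonUnitalCStarAlgebra B] [PartialOrder B] [StarOrderedRing B]
    [NormedAddCommGroup E] [NormedSpace ℂ E] [SMul Bᵐᵒᵖ E] [CStarModuleOld B E]
    [CompleteSpace E]
    (hfull : (Submodule.span ℂ {b : B | ∃ x y : E, (inner B x y : B) = b}).topologicalClosure = ⊤)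
    (D : Submodule ℂ E) (hdense : Dense (D : Set E)) (δ : D →ₗ[ℂ] E)
    (hinv : ∀ x y z : D, (x : E) <• (inner B (y : E) (z : E) : B) ∈ D)
    (htern : ∀ x y z : D,
      δ ⟨(x : E) <• (inner B (y : E) (z : E) : B), hinv x y z⟩ =
        δ x <• (inner B (y : E) (z : E) : B) + (x : E) <• (inner B (δ y) (z : E) : B)
          + (x : E) <• (inner B (y : E) (δ z) : B))
    (d : (Submodule.span ℂ {b : B | ∃ x y : D, (inner B (x : E) (y : E) : B) = b}) →ₗ[ℂ] B)
    (hd : ∀ x y : D, d ⟨(inner B (x : E) (y : E) : B),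
        Submodule.subset_span ⟨x, y, rfl⟩⟩ =
      (inner B (δ x) (y : E) : B) + (inner B (x : E) (δ y) : B)) :
    ∀ (b b' : Submodule.span ℂ {b : B | ∃ x y : D, (inner B (x : E) (y : E) : B) = b})
      (h : (b : B) * (b' : B) ∈ Submodule.span ℂ {b : B | ∃ x y : D, (inner B (x : E) (y : E) : B) = b}),
      d ⟨(b : B) * (b' : B), h⟩ = d b * (b' : B) + (b : B) * d b' :=
  stmt11_general D δ hinv htern d hd
end

section
/- Lance-type theorem with a homomorphism: let E be a Hilbert B-module, F a Hilbert C-module, and u : E → F a surjective isometric Banach space isomorphism onto F. If u is φ-linear (u(xb) = u(x)φ(b)) for a surjective *-homomorphism φ : B → C, and E, F are full, then u is a φ-unitary, i.e. ⟨ux, uy⟩ = φ(⟨x,y⟩) for all x, y ∈ E. -/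
/-!
Fullness of `E` makes `φ` injective, hence isometric. For `b : B`,
`‖star (φ b) * ⟪u x, u x⟫ * φ b‖ = ‖u (x <• b)‖ ^ 2 = ‖x <• b‖ ^ 2 = ‖star (φ b) * φ ⟪x, x⟫ * φ b‖`,
so, `φ` being onto, the positive elements `⟪u x, u x⟫` and `φ ⟪x, x⟫` have conjugates of equal
norm by every `d : C`; in a C⋆-algebra this forces them to be equal. Polarization passes from
`⟪u x, u x⟫` to `⟪u x, u y⟫`.
-/

open scoped RightActions

/-- The Hilbert C⋆-module class as Mathlib defined it in December 2024 (right action of `Aᵐᵒᵖ`,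
inner product `A`-linear on the right in the second argument). -/
class OldCStarModule (A : outParam <| Type*) (E : Type*) [NonUnitalSemiring A] [StarRing A]
    [Module ℂ A] [AddCommGroup E] [Module ℂ E] [PartialOrder A] [SMul Aᵐᵒᵖ E] [Norm A] [Norm E]
    extends Inner A E where
  inner_add_right {x} {y} {z} : inner x (y + z) = inner x y + inner x z
  inner_self_nonneg {x} : 0 ≤ inner x x
  inner_self {x} : inner x x = 0 ↔ x = 0
  inner_op_smul_right {a : A} {x y : E} : inner x (y <• a) = inner x y * a
  inner_smul_right_complex {z : ℂ} {x} {y} : inner x (z • y) = z • inner x y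
  star_inner x y : star (inner x y) = inner y x
  norm_eq_sqrt_norm_inner_self x : ‖x‖ = Real.sqrt ‖inner x x‖

open scoped InnerProductSpace

namespace OldCStarModule

variable {A E : Type*} [NonUnitalCStarAlgebra A] [PartialOrder A]
  [NormedAddCommGroup E] [NormedSpace ℂ E] [SMul Aᵐᵒᵖ E] [OldCStarModule A E]

attribute [simp] inner_add_right inner_op_smul_right inner_smul_right_complex

@[simp]
lemma inner_add_left (x y z : E) : ⟪x + y, z⟫_A = ⟪x, z⟫_A + ⟪y, z⟫_A := by
  rw [← star_inner z, inner_add_right, star_add, star_inner, star_inner]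

@[simp]
lemma inner_op_smul_left (a : A) (x y : E) : ⟪x <• a, y⟫_A = star a * ⟪x, y⟫_A := by
  rw [← star_inner y, inner_op_smul_right, star_mul, star_inner]

@[simp]
lemma inner_smul_left_complex (z : ℂ) (x y : E) : ⟪z • x, y⟫_A = star z • ⟪x, y⟫_A := by
  rw [← star_inner y, inner_smul_right_complex, star_smul, star_inner]

@[simp]
lemma inner_zero_right (x : E) : ⟪x, 0⟫_A = 0 := by
  simpa using inner_add_right (A := A) (x := x) (y := 0) (z := 0)

@[simp]
lemma inner_neg_right (x y : E) : ⟪x, -y⟫_A = -⟪x, y⟫_A := by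
  rw [← neg_one_smul ℂ y, inner_smul_right_complex, neg_one_smul]

@[simp]
lemma inner_neg_left (x y : E) : ⟪-x, y⟫_A = -⟪x, y⟫_A := by
  rw [← star_inner y, inner_neg_right, star_neg, star_inner]

@[simp]
lemma inner_sub_right (x y z : E) : ⟪x, y - z⟫_A = ⟪x, y⟫_A - ⟪x, z⟫_A := by
  simp [sub_eq_add_neg]

@[simp]
lemma inner_sub_left (x y z : E) : ⟪x - y, z⟫_A = ⟪x, z⟫_A - ⟪y, z⟫_A := by
  simp [sub_eq_add_neg]

lemma norm_sq_eq_norm_inner_self (x : E) : ‖x‖ ^ 2 = ‖⟪x, x⟫_A‖ := by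
  rw [norm_eq_sqrt_norm_inner_self, Real.sq_sqrt (norm_nonneg _)]

lemma inner_self_op_smul (x : E) (a : A) : ⟪x <• a, x <• a⟫_A = star a * ⟪x, x⟫_A * a := by
  simp [mul_assoc]

@[simp]
lemma op_smul_zero (x : E) : x <• (0 : A) = 0 := by
  rw [← norm_eq_zero, norm_eq_sqrt_norm_inner_self, inner_self_op_smul]
  simp

lemma polarization (x y : E) :
    (4 : ℂ) • ⟪x, y⟫_A = ⟪x + y, x + y⟫_A - ⟪x - y, x - y⟫_A
      - Complex.I • ⟪x + Complex.I • y, x + Complex.I • y⟫_A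
      + Complex.I • ⟪x - Complex.I • y, x - Complex.I • y⟫_A := by
  simp only [inner_add_left, inner_add_right, inner_sub_left, inner_sub_right,
    inner_smul_left_complex, inner_smul_right_complex, Complex.star_def, Complex.conj_I]
  match_scalars <;> ring_nf <;> simp only [Complex.I_sq] <;> ring

/-- `⟪x, y⟫ * a = ⟪x, y <• a⟫ = 0`, so right multiplication by `a` vanishes on a dense subspace,
in particular on `star a`. -/
lemma eq_zero_of_forall_op_smul_eq_zero
    (hfull : (Submodule.span ℂ {a : A | ∃ x y : E, ⟪x, y⟫_A = a}).topologicalClosure = ⊤)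
    {a : A} (h : ∀ x : E, x <• a = 0) : a = 0 := by
  let mulRight : A →L[ℂ] A := (ContinuousLinearMap.mul ℂ A).flip a
  have hspan : Submodule.span ℂ {a : A | ∃ x y : E, ⟪x, y⟫_A = a} ≤ LinearMap.ker (mulRight : A →ₗ[ℂ] A) := by
    rw [Submodule.span_le]
    rintro _ ⟨x, y, rfl⟩
    simp [mulRight, ← inner_op_smul_right, h]
  have hker : LinearMap.ker (mulRight : A →ₗ[ℂ] A) = ⊤ := by
    rw [eq_top_iff, ← hfull]
    exact Submodule.topologicalClosure_minimal _ hspan (ContinuousLinearMap.isClosed_ker _)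
  have hstar : star a * a = 0 := LinearMap.mem_ker.mp (hker ▸ Submodule.mem_top : star a ∈ _)
  exact (CStarRing.star_mul_self_eq_zero_iff a).mp hstar

end OldCStarModule

section CStarOrder

open Filter Topology CFC

lemma norm_sqrt_mul_sq {A : Type*} [NonUnitalCStarAlgebra A] [PartialOrder A] [StarOrderedRing A]
    {c : A} (hc : 0 ≤ c) (d : A) : ‖sqrt c * d‖ ^ 2 = ‖star d * c * d‖ := by
  rw [sq, ← CStarRing.norm_star_mul_self, star_mul, (sqrt_nonneg c).isSelfAdjoint.star_eq,
    mul_assoc, ← mul_assoc (sqrt c), sqrt_mul_sqrt_self c hc, ← mul_assoc]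

/-- `c ≤ a + ε` because conjugating by `(a + ε) ^ (-1/2)` brings both sides below `1`. -/
lemma le_of_forall_norm_sqrt_mul_le {A : Type*} [CStarAlgebra A] [PartialOrder A]
    [StarOrderedRing A] {a c : A} (ha : 0 ≤ a) (hc : 0 ≤ c)
    (h : ∀ d : A, ‖sqrt c * d‖ ≤ ‖sqrt a * d‖) : c ≤ a := by
  have hle : ∀ ε : ℝ, 0 < ε → c ≤ a + ε • 1 := by
    intro ε hε
    have hpos : IsStrictlyPositive (a + ε • 1) :=
      .nonneg_add ha (isStrictlyPositive_one.smul hε)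
    rw [le_iff_norm_sqrt_mul_rpow c _ hc hpos]
    exact (h _).trans ((le_iff_norm_sqrt_mul_rpow a _ ha hpos).mp
      (le_add_of_nonneg_right (smul_nonneg hε.le zero_le_one)))
  have hlim : Tendsto (fun ε : ℝ ↦ a + ε • (1 : A)) (𝓝[>] 0) (𝓝 a) := by
    have : Tendsto (fun ε : ℝ ↦ a + ε • (1 : A)) (𝓝 0) (𝓝 (a + (0 : ℝ) • 1)) :=
      (continuous_const.add (continuous_id.smul continuous_const)).tendsto 0
    simpa using this.mono_left nhdsWithin_le_nhds
  exact ge_of_tendsto hlim (eventually_nhdsWithin_of_forall hle)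

lemma norm_inr_mul_le_of_forall_norm_mul_le {A : Type*} [NonUnitalCStarAlgebra A]
    [PartialOrder A] [StarOrderedRing A] {s r : A} (h : ∀ d : A, ‖s * d‖ ≤ ‖r * d‖)
    (d : Unitization ℂ A) : ‖(s : Unitization ℂ A) * d‖ ≤ ‖(r : Unitization ℂ A) * d‖ := by
  have hl := CStarAlgebra.increasingApproximateUnit A
  have := hl.neBot
  have inr_snd {x : Unitization ℂ A} (hx : x.fst = 0) : (x.snd : Unitization ℂ A) = x :=
    Unitization.ext hx.symm rfl
  set m := ((s : Unitization ℂ A) * d).snd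
  have hm : (m : Unitization ℂ A) = s * d := inr_snd (by simp [Unitization.fst_mul])
  have hbound : ∀ᶠ e in CStarAlgebra.approximateUnit A, ‖m * e‖ ≤ ‖(r : Unitization ℂ A) * d‖ := by
    filter_upwards [hl.eventually_norm] with e he
    have hde : ((d * e).snd : Unitization ℂ A) = d * e := inr_snd (by simp [Unitization.fst_mul])
    calc ‖m * e‖ = ‖s * (d * (e : Unitization ℂ A)).snd‖ := by
          rw [← Unitization.norm_inr (𝕜 := ℂ) (m * e), ← Unitization.norm_inr (𝕜 := ℂ) (s * _),
            Unitization.inr_mul, Unitization.inr_mul, hm, hde, mul_assoc]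
      _ ≤ ‖r * (d * (e : Unitization ℂ A)).snd‖ := h _
      _ = ‖(r : Unitization ℂ A) * d * e‖ := by
          rw [← Unitization.norm_inr (𝕜 := ℂ), Unitization.inr_mul, hde, mul_assoc]
      _ ≤ ‖(r : Unitization ℂ A) * d‖ * ‖(e : Unitization ℂ A)‖ := norm_mul_le _ _
      _ ≤ ‖(r : Unitization ℂ A) * d‖ :=
          mul_le_of_le_one_right (norm_nonneg _) (by rwa [Unitization.norm_inr])
  rw [← hm, Unitization.norm_inr]
  exact le_of_tendsto (hl.tendsto_mul_left m).norm hbound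

lemma le_of_forall_norm_conj_le {A : Type*} [NonUnitalCStarAlgebra A] [PartialOrder A]
    [StarOrderedRing A] {a c : A} (ha : 0 ≤ a) (hc : 0 ≤ c)
    (h : ∀ d : A, ‖star d * c * d‖ ≤ ‖star d * a * d‖) : c ≤ a := by
  have hsqrt (d : A) : ‖sqrt c * d‖ ≤ ‖sqrt a * d‖ := by
    rw [← pow_le_pow_iff_left₀ (norm_nonneg _) (norm_nonneg _) two_ne_zero,
      norm_sqrt_mul_sq hc, norm_sqrt_mul_sq ha]
    exact h d
  rw [← Unitization.inr_le_iff c a hc.isSelfAdjoint ha.isSelfAdjoint]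
  refine le_of_forall_norm_sqrt_mul_le (Unitization.inr_nonneg_iff.mpr ha)
    (Unitization.inr_nonneg_iff.mpr hc) fun d ↦ ?_
  rw [Unitization.sqrt_inr, Unitization.sqrt_inr]
  exact norm_inr_mul_le_of_forall_norm_mul_le hsqrt d

end CStarOrder

section SemilinearIsometry

open OldCStarModule

variable {B C E F : Type*}
  [NonUnitalCStarAlgebra B] [PartialOrder B] [NonUnitalCStarAlgebra C] [PartialOrder C]
  [NormedAddCommGroup E] [NormedSpace ℂ E] [SMul Bᵐᵒᵖ E] [OldCStarModule B E]
  [NormedAddCommGroup F] [NormedSpace ℂ F] [SMul Cᵐᵒᵖ F] [OldCStarModule C F]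

lemma inner_map_eq_of_inner_self_map_eq {G : Type*} [FunLike G B C] [LinearMapClass G ℂ B C]
    (ψ : G) (u : E →ₗ[ℂ] F) (h : ∀ x, ⟪u x, u x⟫_C = ψ ⟪x, x⟫_B) (x y : E) :
    ⟪u x, u y⟫_C = ψ ⟪x, y⟫_B := by
  apply smul_right_injective C (by norm_num : (4 : ℂ) ≠ 0)
  simp only [← map_smul ψ, polarization, ← map_add, ← map_sub, ← map_smul, h]

variable {φ : B →⋆ₙₐ[ℂ] C} {u : E →ₗ[ℂ] F}

lemma injective_of_isometry_of_map_op_smul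
    (hfull : (Submodule.span ℂ {b : B | ∃ x y : E, ⟪x, y⟫_B = b}).topologicalClosure = ⊤)
    (hisom : ∀ x, ‖u x‖ = ‖x‖) (hlin : ∀ x b, u (x <• b) = u x <• φ b) :
    Function.Injective φ := by
  refine (injective_iff_map_eq_zero φ).mpr fun b hb ↦
    eq_zero_of_forall_op_smul_eq_zero hfull fun x ↦ ?_
  rw [← norm_eq_zero, ← hisom, hlin, hb, op_smul_zero, norm_zero]

lemma inner_self_map_eq_of_isometry [StarOrderedRing B] [StarOrderedRing C]
    (hφ : ∀ b, ‖φ b‖ = ‖b‖) (hφsurj : Function.Surjective φ)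
    (hisom : ∀ x, ‖u x‖ = ‖x‖) (hlin : ∀ x b, u (x <• b) = u x <• φ b) (x : E) :
    ⟪u x, u x⟫_C = φ ⟪x, x⟫_B := by
  have hconj (d : C) : ‖star d * ⟪u x, u x⟫_C * d‖ = ‖star d * φ ⟪x, x⟫_B * d‖ := by
    obtain ⟨b, rfl⟩ := hφsurj d
    calc ‖star (φ b) * ⟪u x, u x⟫_C * φ b‖ = ‖u (x <• b)‖ ^ 2 := by
          rw [norm_sq_eq_norm_inner_self, hlin, inner_self_op_smul]
      _ = ‖x <• b‖ ^ 2 := by rw [hisom]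
      _ = ‖star (φ b) * φ ⟪x, x⟫_B * φ b‖ := by
          rw [norm_sq_eq_norm_inner_self, inner_self_op_smul, ← hφ, map_mul, map_mul, map_star]
  have hc : 0 ≤ ⟪u x, u x⟫_C := inner_self_nonneg
  have ha : 0 ≤ φ ⟪x, x⟫_B := map_nonneg φ inner_self_nonneg
  exact le_antisymm (le_of_forall_norm_conj_le ha hc fun d ↦ (hconj d).le)
    (le_of_forall_norm_conj_le hc ha fun d ↦ (hconj d).ge)

end SemilinearIsometry

theorem stmt18_general {B C E F : Type*}
    [NonUnitalCStarAlgebra B] [PartialOrder B] [StarOrderedRing B]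
    [NonUnitalCStarAlgebra C] [PartialOrder C] [StarOrderedRing C]
    [NormedAddCommGroup E] [NormedSpace ℂ E] [SMul Bᵐᵒᵖ E] [OldCStarModule B E]
    [NormedAddCommGroup F] [NormedSpace ℂ F] [SMul Cᵐᵒᵖ F] [OldCStarModule C F]
    (hfullE : (Submodule.span ℂ {b : B | ∃ x y : E, (inner B x y : B) = b}).topologicalClosure = ⊤)
    (φ : B →⋆ₙₐ[ℂ] C) (hφsurj : Function.Surjective φ)
    (u : E →ₗ[ℂ] F)
    (hisom : ∀ x : E, ‖u x‖ = ‖x‖)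
    (hlin : ∀ (x : E) (b : B), u (x <• b) = (u x) <• (φ b)) :
    ∀ x y : E, (inner C (u x) (u y) : C) = φ (inner B x y) :=
  have hφ : ∀ b, ‖φ b‖ = ‖b‖ :=
    NonUnitalStarAlgHom.norm_map φ (injective_of_isometry_of_map_op_smul hfullE hisom hlin)
  inner_map_eq_of_inner_self_map_eq φ u (inner_self_map_eq_of_isometry hφ hφsurj hisom hlin)

/-- Lance-type theorem: a surjective, `φ`-linear, isometric Banach space isomorphism
between full Hilbert C*-modules, for a surjective `*`-homomorphism `φ`, is a
`φ`-unitary. -/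
theorem stmt18 {B C E F : Type*}
    [NonUnitalCStarAlgebra B] [PartialOrder B] [StarOrderedRing B]
    [NonUnitalCStarAlgebra C] [PartialOrder C] [StarOrderedRing C]
    [NormedAddCommGroup E] [NormedSpace ℂ E] [SMul Bᵐᵒᵖ E] [OldCStarModule B E]
    [CompleteSpace E]
    [NormedAddCommGroup F] [NormedSpace ℂ F] [SMul Cᵐᵒᵖ F] [OldCStarModule C F]
    [CompleteSpace F]
    (hfullE : (Submodule.span ℂ {b : B | ∃ x y : E, (inner B x y : B) = b}).topologicalClosure = ⊤)
    (hfullF : (Submodule.span ℂ {c : C | ∃ x y : F, (inner C x y : C) = c}).topologicalClosure = ⊤)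
    (φ : B →⋆ₙₐ[ℂ] C) (hφsurj : Function.Surjective φ)
    (u : E →ₗ[ℂ] F) (hbij : Function.Bijective u)
    (hisom : ∀ x : E, ‖u x‖ = ‖x‖)
    (hlin : ∀ (x : E) (b : B), u (x <• b) = (u x) <• (φ b)) :
    ∀ x y : E, (inner C (u x) (u y) : C) = φ (inner B x y) :=
  stmt18_general hfullE φ hφsurj u hisom hlin
end
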